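/- arXiv:2410.09678 — 4 statements merged into one kernel-verified Lean document; each statement's English description precedes it below -/
import Mathlib

section
/- Let δ ∈ (0,1), let c ≥ 1 be a constant, let 2 ≤ P ≤ d, and let v₁, …, v_m be i.i.d. uniform on S^{d−1}. If m ≥ 400 c P^{8c²} √(log P) log(max(P, 1/δ)), then with probability at least 1 − δ: for every p ∈ [P] there exists i ∈ [m] such that |v_{i,p}| / max_{q∈[P]\{p}} |v_{i,q}| ≥ (1+2c)/(1+c). -/
/-! Normalising a Gaussian vector does not change the ratio of one coordinate to the largest of
the others, so a neuron `v ∼ unif(S^{d-1})` is good for coordinate `p` with at least the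
Gaussian probability that `|Z_p| ≥ r t` while `0 < |Z_q| ≤ t` for the other `q ∈ [P]`, where
`r = (1 + 2c)/(1 + c)`. With
`t = 2 √(log P)` this probability is at least `P^{-8c²}/48`, and a union bound over `p` of the
independent failures of all `m` neurons gives the claim. -/

open MeasureTheory ProbabilityTheory

noncomputable section

/-- The standard Gaussian measure `N(0, I_d)` on `ℝ^d` (as Euclidean space). -/
def stdGaussian (d : ℕ) : Measure (EuclideanSpace ℝ (Fin d)) :=
  (Measure.pi fun _ : Fin d => gaussianReal 0 1).map
    (MeasurableEquiv.toLp 2 (Fin d → ℝ))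

instance (d : ℕ) : IsProbabilityMeasure (stdGaussian d) :=
  Measure.isProbabilityMeasure_map (MeasurableEquiv.measurable _).aemeasurable

/-- The uniform distribution on the unit sphere `S^{d−1}`, realized as the law of
`Z/‖Z‖` for `Z ∼ N(0, I_d)`. -/
def unifSphere (d : ℕ) : Measure (EuclideanSpace ℝ (Fin d)) :=
  (stdGaussian d).map fun x => ‖x‖⁻¹ • x

instance (d : ℕ) : IsProbabilityMeasure (unifSphere d) := by
  refine Measure.isProbabilityMeasure_map (Measurable.aemeasurable ?_)
  exact (continuous_smul.measurable).comp ((measurable_norm.inv).prodMk measurable_id)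

open Real Set Function
open scoped ENNReal

lemma gaussianReal_real_setOf_le_abs_le {t : ℝ} (ht : 0 ≤ t) :
    (gaussianReal 0 1).real {x | t ≤ |x|} ≤ 2 * exp (-t ^ 2 / 2) := by
  have hmgf : ∀ s, mgf id (gaussianReal 0 1) s = exp (s ^ 2 / 2) := by
    simp [mgf_id_gaussianReal]
  have hint : ∀ s, Integrable (fun x => exp (s * id x)) (gaussianReal 0 1) :=
    integrable_exp_mul_gaussianReal
  have hright : (gaussianReal 0 1).real {x | t ≤ x} ≤ exp (-t ^ 2 / 2) := by
    refine (measure_ge_le_exp_mul_mgf t ht (hint t)).trans_eq ?_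
    rw [hmgf, ← exp_add]; ring_nf
  have hleft : (gaussianReal 0 1).real {x | x ≤ -t} ≤ exp (-t ^ 2 / 2) := by
    refine (measure_le_le_exp_mul_mgf (-t) (neg_nonpos.mpr ht) (hint (-t))).trans_eq ?_
    rw [hmgf, ← exp_add]; ring_nf
  calc (gaussianReal 0 1).real {x | t ≤ |x|}
      ≤ (gaussianReal 0 1).real ({x | t ≤ x} ∪ {x | x ≤ -t}) := by
        refine measureReal_mono fun x (hx : t ≤ |x|) => ?_
        rcases le_abs'.mp hx with h | h
        · exact Or.inr h
        · exact Or.inl h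
    _ ≤ 2 * exp (-t ^ 2 / 2) := (measureReal_union_le _ _).trans (by linarith)

lemma ofReal_one_sub_le_gaussianReal_setOf_abs_mem_Ioc {t : ℝ} (ht : 0 ≤ t) :
    ENNReal.ofReal (1 - 2 * exp (-t ^ 2 / 2)) ≤ gaussianReal 0 1 {x | |x| ∈ Ioc 0 t} := by
  have hmeas : MeasurableSet {x : ℝ | |x| ∈ Ioc 0 t} := measurable_abs measurableSet_Ioc
  have hsub : {x : ℝ | |x| ∈ Ioc 0 t}ᶜ ⊆ {0} ∪ {x | t ≤ |x|} := by
    intro x hx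
    simp only [mem_compl_iff, mem_ofPred_eq, mem_Ioc, not_and_or, not_lt, not_le] at hx
    rcases hx with h | h
    · exact Or.inl (abs_nonpos_iff.mp h)
    · exact Or.inr h.le
  have hcompl :
      (gaussianReal 0 1).real {x : ℝ | |x| ∈ Ioc 0 t}ᶜ ≤ 2 * exp (-t ^ 2 / 2) := by
    have := nullSingletonClass_gaussianReal (μ := 0) one_ne_zero
    calc _ ≤ (gaussianReal 0 1).real ({0} ∪ {x | t ≤ |x|}) := measureReal_mono hsub
      _ ≤ (gaussianReal 0 1).real {0} + (gaussianReal 0 1).real {x | t ≤ |x|} :=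
          measureReal_union_le _ _
      _ ≤ 2 * exp (-t ^ 2 / 2) := by
          simpa [measureReal_def] using gaussianReal_real_setOf_le_abs_le ht
  rw [measureReal_compl hmeas, probReal_univ] at hcompl
  rw [← ofReal_measureReal]
  exact ENNReal.ofReal_le_ofReal (by linarith)

lemma ofReal_le_gaussianReal_setOf_le_abs {s : ℝ} (hs : 0 ≤ s) :
    ENNReal.ofReal ((√(2 * π))⁻¹ * exp (-(s + 1) ^ 2 / 2))
      ≤ gaussianReal 0 1 {x | s ≤ |x|} := by
  have hdensity : ∀ x ∈ Icc s (s + 1),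
      ENNReal.ofReal ((√(2 * π))⁻¹ * exp (-(s + 1) ^ 2 / 2)) ≤ gaussianPDF 0 1 x := by
    intro x hx
    simp only [gaussianPDF, gaussianPDFReal, NNReal.coe_one, mul_one, sub_zero]
    gcongr ENNReal.ofReal (_ * exp ?_)
    nlinarith [hx.1, hx.2]
  calc ENNReal.ofReal ((√(2 * π))⁻¹ * exp (-(s + 1) ^ 2 / 2))
      = ∫⁻ _ in Icc s (s + 1),
          ENNReal.ofReal ((√(2 * π))⁻¹ * exp (-(s + 1) ^ 2 / 2)) := by
        simp [Real.volume_Icc]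
    _ ≤ ∫⁻ x in Icc s (s + 1), gaussianPDF 0 1 x :=
        setLIntegral_mono' measurableSet_Icc hdensity
    _ = gaussianReal 0 1 (Icc s (s + 1)) := (gaussianReal_apply 0 one_ne_zero _).symm
    _ ≤ gaussianReal 0 1 {x | s ≤ |x|} := measure_mono fun x hx => hx.1.trans (le_abs_self x)

lemma Fintype.prod_ite_eq_mul_pow {κ M : Type*} [Fintype κ] [DecidableEq κ] [CommMonoid M]
    (p : κ) (a b : M) : ∏ k, (if k = p then a else b) = a * b ^ (Fintype.card κ - 1) := by
  rw [Fintype.prod_eq_mul_prod_compl p, if_pos rfl,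
    Finset.prod_congr rfl fun k hk => if_neg (by simpa using hk), Finset.prod_const,
    Finset.card_compl, Finset.card_singleton]

lemma MeasureTheory.Measure.pi_setOf_forall_apply_mem_of_injective {ι κ α : Type*} [Fintype ι]
    [Fintype κ] [MeasurableSpace α] (μ : ι → Measure α) [∀ i, IsProbabilityMeasure (μ i)]
    {e : κ → ι} (he : Injective e) (s : κ → Set α) :
    Measure.pi μ {x | ∀ k, x (e k) ∈ s k} = ∏ k, μ (e k) (s k) := by
  have hset :
      {x : ι → α | ∀ k, x (e k) ∈ s k} = univ.pi (Function.extend e s fun _ => univ) := by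
    ext x
    refine ⟨fun hx i _ => ?_, fun hx k => by simpa [he.extend_apply] using hx (e k) trivial⟩
    by_cases hi : ∃ k, e k = i
    · obtain ⟨k, rfl⟩ := hi
      simpa [he.extend_apply] using hx k
    · simp [extend_apply' _ _ _ hi]
  rw [hset, Measure.pi_pi]
  refine (Fintype.prod_of_injective e he _ _ (fun i hi => ?_) fun k => ?_).symm
  · simp [extend_apply' _ _ _ hi]
  · simp [he.extend_apply]

/-- The paper's `|x_p| / max_{q ≠ p} |x_q|`; it is `0` when all the other coordinates vanish. -/
def peakRatio {κ : Type*} (x : κ → ℝ) (p : κ) : ℝ :=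
  |x p| / ⨆ q : {q // q ≠ p}, |x q|

section peakRatio

variable {κ : Type*} (x : κ → ℝ) (p : κ)

lemma peakRatio_smul {a : ℝ} (ha : a ≠ 0) : peakRatio (a • x) p = peakRatio x p := by
  simp only [peakRatio, Pi.smul_apply, smul_eq_mul, abs_mul,
    ← Real.mul_iSup_of_nonneg (abs_nonneg a)]
  exact mul_div_mul_left _ _ (abs_ne_zero.mpr ha)

lemma le_peakRatio [Finite κ] {r t : ℝ} (hr : 0 ≤ r) {q₀ : κ} (hq₀ : q₀ ≠ p)
    (hx₀ : x q₀ ≠ 0) (hle : ∀ q ≠ p, |x q| ≤ t) (hp : r * t ≤ |x p|) :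
    r ≤ peakRatio x p := by
  have hbdd : BddAbove (range fun q : {q // q ≠ p} => |x q|) := Finite.bddAbove_range _
  have hpos : 0 < ⨆ q : {q // q ≠ p}, |x q| :=
    (abs_pos.mpr hx₀).trans_le (le_ciSup hbdd ⟨q₀, hq₀⟩)
  have : Nonempty {q // q ≠ p} := ⟨⟨q₀, hq₀⟩⟩
  have hsup : ⨆ q : {q // q ≠ p}, |x q| ≤ t := ciSup_le fun q => hle q q.2
  rw [peakRatio, le_div_iff₀ hpos]
  exact (mul_le_mul_of_nonneg_left hsup hr).trans hp

lemma measurable_peakRatio [Countable κ] : Measurable fun x : κ → ℝ => peakRatio x p :=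
  ((measurable_pi_apply p).abs).div
    (.iSup fun q : {q // q ≠ p} => (measurable_pi_apply (q : κ)).abs)

end peakRatio

section GoodNeuron

variable {d : ℕ} {κ : Type*}

lemma peakRatio_normalize (e : κ → Fin d) (v : EuclideanSpace ℝ (Fin d)) (p : κ) :
    peakRatio (fun q => (‖v‖⁻¹ • v) (e q)) p = peakRatio (fun q => v (e q)) p := by
  rcases eq_or_ne v 0 with rfl | hv
  · simp
  · exact peakRatio_smul (fun q => v (e q)) p (inv_ne_zero (norm_ne_zero_iff.mpr hv))

lemma measurableSet_le_peakRatio [Countable κ] (e : κ → Fin d) (p : κ) (r : ℝ) :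
    MeasurableSet {v : EuclideanSpace ℝ (Fin d) | r ≤ peakRatio (fun q => v (e q)) p} :=
  measurableSet_le measurable_const <| (measurable_peakRatio p).comp <|
    measurable_pi_lambda (fun (v : EuclideanSpace ℝ (Fin d)) q => v (e q)) fun q =>
      (measurable_pi_apply (e q)).comp (WithLp.measurable_ofLp 2 _)

lemma unifSphere_setOf_le_peakRatio [Countable κ] (e : κ → Fin d) (p : κ) (r : ℝ) :
    unifSphere d {v | r ≤ peakRatio (fun q => v (e q)) p}
      = (Measure.pi fun _ : Fin d => gaussianReal 0 1)
          {x | r ≤ peakRatio (fun q => x (e q)) p} := by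
  have hnormalize : Measurable fun v : EuclideanSpace ℝ (Fin d) => ‖v‖⁻¹ • v :=
    (continuous_smul.measurable).comp ((measurable_norm.inv).prodMk measurable_id)
  have hG := measurableSet_le_peakRatio e p r
  rw [unifSphere, Measure.map_apply hnormalize hG, _root_.stdGaussian,
    Measure.map_apply (MeasurableEquiv.measurable _) (hnormalize hG)]
  congr 1
  ext x
  exact iff_of_eq (congrArg (r ≤ ·) (peakRatio_normalize e (WithLp.toLp 2 x) p))

/-- Lower bound for `P(|Z_p| ≥ r t) · P(0 < |Z| ≤ t)^(n - 1)`: the first factor bounds the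
Gaussian density on `[r t, r t + 1]` from below, the second uses the Chernoff bound
`P(|Z| ≥ t) ≤ 2 exp (-t² / 2)`. -/
def gapProbBound (n : ℕ) (r t : ℝ) : ℝ :=
  (√(2 * π))⁻¹ * exp (-(r * t + 1) ^ 2 / 2) * (1 - 2 * exp (-t ^ 2 / 2)) ^ (n - 1)

lemma gapProbBound_nonneg (n : ℕ) (r : ℝ) {t : ℝ} (ht : 2 * exp (-t ^ 2 / 2) ≤ 1) :
    0 ≤ gapProbBound n r t :=
  mul_nonneg (by positivity) (pow_nonneg (by linarith) _)

lemma gapProbBound_le_one (n : ℕ) (r : ℝ) {t : ℝ} (ht : 2 * exp (-t ^ 2 / 2) ≤ 1) :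
    gapProbBound n r t ≤ 1 := by
  have hdensity : (√(2 * π))⁻¹ * exp (-(r * t + 1) ^ 2 / 2) ≤ 1 := by
    refine mul_le_one₀ ?_ (exp_pos _).le (exp_le_one_iff.mpr (by nlinarith))
    exact inv_le_one_of_one_le₀ (one_le_sqrt.mpr (by nlinarith [pi_gt_three]))
  exact mul_le_one₀ hdensity (pow_nonneg (by linarith) _)
    (pow_le_one₀ (by linarith) (by linarith [exp_pos (-t ^ 2 / 2)]))

lemma ofReal_gapProbBound_le_unifSphere_setOf_le_peakRatio [Fintype κ] [Nontrivial κ]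
    {e : κ → Fin d} (he : Injective e) (p : κ) {r t : ℝ} (hr : 0 ≤ r) (ht : 0 ≤ t)
    (ht' : 2 * exp (-t ^ 2 / 2) ≤ 1) :
    ENNReal.ofReal (gapProbBound (Fintype.card κ) r t)
      ≤ unifSphere d {v | r ≤ peakRatio (fun q => v (e q)) p} := by
  classical
  let s : κ → Set ℝ := fun k => if k = p then {x | r * t ≤ |x|} else {x | |x| ∈ Ioc 0 t}
  have hsub : {x : Fin d → ℝ | ∀ k, x (e k) ∈ s k}
      ⊆ {x | r ≤ peakRatio (fun q => x (e q)) p} := by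
    intro x hx
    obtain ⟨q₀, hq₀⟩ := exists_ne p
    have hother : ∀ q ≠ p, |x (e q)| ∈ Ioc 0 t := fun q hq => by simpa [s, hq] using hx q
    exact le_peakRatio _ p hr hq₀ (abs_pos.mp (hother q₀ hq₀).1) (fun q hq => (hother q hq).2)
      (by simpa [s] using hx p)
  rw [unifSphere_setOf_le_peakRatio]
  calc ENNReal.ofReal (gapProbBound (Fintype.card κ) r t)
      = ENNReal.ofReal ((√(2 * π))⁻¹ * exp (-(r * t + 1) ^ 2 / 2))
        * ENNReal.ofReal (1 - 2 * exp (-t ^ 2 / 2)) ^ (Fintype.card κ - 1) := by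
        rw [gapProbBound, ENNReal.ofReal_mul (by positivity), ENNReal.ofReal_pow (by linarith)]
    _ ≤ gaussianReal 0 1 {x | r * t ≤ |x|}
        * gaussianReal 0 1 {x | |x| ∈ Ioc 0 t} ^ (Fintype.card κ - 1) := by
        gcongr
        · exact ofReal_le_gaussianReal_setOf_le_abs (mul_nonneg hr ht)
        · exact ofReal_one_sub_le_gaussianReal_setOf_abs_mem_Ioc ht
    _ = ∏ k, gaussianReal 0 1 (s k) := by
        simp only [s, apply_ite, Fintype.prod_ite_eq_mul_pow]
    _ = _ := (Measure.pi_setOf_forall_apply_mem_of_injective (fun _ => gaussianReal 0 1) he s).symm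
    _ ≤ _ := measure_mono hsub

end GoodNeuron

lemma ofReal_one_sub_le_pi_setOf_forall_exists_mem {α ι κ : Type*} [MeasurableSpace α]
    [Fintype ι] [Fintype κ] (μ : Measure α) [IsProbabilityMeasure μ] {G : κ → Set α}
    (hG : ∀ k, MeasurableSet (G k)) {ρ : ℝ} (hρ0 : 0 ≤ ρ) (hρ1 : ρ ≤ 1)
    (hρ : ∀ k, ENNReal.ofReal ρ ≤ μ (G k)) :
    ENNReal.ofReal (1 - Fintype.card κ * (1 - ρ) ^ Fintype.card ι)
      ≤ Measure.pi (fun _ : ι => μ) {V | ∀ k, ∃ i, V i ∈ G k} := by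
  set E := {V : ι → α | ∀ k, ∃ i, V i ∈ G k}
  have hmiss : ∀ k, μ (G k)ᶜ ≤ ENNReal.ofReal (1 - ρ) := fun k => by
    rw [prob_compl_eq_one_sub (hG k), ENNReal.ofReal_sub _ hρ0, ENNReal.ofReal_one]
    exact tsub_le_tsub_left (hρ k) 1
  have hpow : 0 ≤ (1 - ρ) ^ Fintype.card ι := pow_nonneg (by linarith) _
  have hfail : Measure.pi (fun _ : ι => μ) Eᶜ
      ≤ ENNReal.ofReal (Fintype.card κ * (1 - ρ) ^ Fintype.card ι) := by
    have hsub : Eᶜ ⊆ ⋃ k, univ.pi fun _ => (G k)ᶜ := fun V hV => by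
      simp only [E, mem_compl_iff, mem_ofPred_eq, not_forall, not_exists] at hV
      obtain ⟨k, hk⟩ := hV
      exact mem_iUnion.mpr ⟨k, fun i _ => hk i⟩
    calc _ ≤ ∑ k, Measure.pi (fun _ : ι => μ) (univ.pi fun _ => (G k)ᶜ) :=
          (measure_mono hsub).trans (measure_iUnion_fintype_le _ _)
      _ ≤ ∑ _k : κ, ENNReal.ofReal (1 - ρ) ^ Fintype.card ι := by
          gcongr with k
          rw [Measure.pi_pi, Finset.prod_const, Finset.card_univ]
          exact pow_le_pow_left' (hmiss k) _
      _ = _ := by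
          rw [Finset.sum_const, Finset.card_univ, nsmul_eq_mul,
            ← ENNReal.ofReal_pow (by linarith), ← ENNReal.ofReal_natCast,
            ← ENNReal.ofReal_mul (by positivity)]
  calc ENNReal.ofReal (1 - Fintype.card κ * (1 - ρ) ^ Fintype.card ι)
      = 1 - ENNReal.ofReal (Fintype.card κ * (1 - ρ) ^ Fintype.card ι) := by
        rw [ENNReal.ofReal_sub _ (by positivity), ENNReal.ofReal_one]
    _ ≤ 1 - Measure.pi (fun _ : ι => μ) Eᶜ := tsub_le_tsub_left hfail 1
    _ ≤ Measure.pi (fun _ : ι => μ) E := by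
        rw [tsub_le_iff_right, ← measure_univ (μ := Measure.pi fun _ : ι => μ),
          ← union_compl_self E]
        exact measure_union_le _ _



lemma mul_one_sub_pow_le_of_log_add_log_le {N δ ρ : ℝ} {m : ℕ} (hN : 0 < N) (hδ : 0 < δ)
    (hρ : ρ ≤ 1) (h : log N + log (1 / δ) ≤ ρ * m) : N * (1 - ρ) ^ m ≤ δ := by
  have hpow : (1 - ρ) ^ m ≤ exp (-(ρ * m)) := by
    rw [← neg_mul, mul_comm, exp_nat_mul]
    exact pow_le_pow_left₀ (by linarith) (by linarith [add_one_le_exp (-ρ)]) m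
  calc N * (1 - ρ) ^ m ≤ exp (log N) * exp (-(ρ * m)) := by
        rw [exp_log hN]; exact mul_le_mul_of_nonneg_left hpow hN.le
    _ ≤ exp (log δ) := by
        rw [← exp_add]
        exact exp_le_exp.mpr (by rw [one_div, log_inv] at h; linarith)
    _ = δ := exp_log hδ

lemma div_le_three_halves_mul {c : ℝ} (hc : 1 ≤ c) : (1 + 2 * c) / (1 + c) ≤ 3 / 2 * c := by
  rw [div_le_iff₀ (by linarith)]
  nlinarith

lemma exp_neg_two_sqrt_log_sq_div_two {x : ℝ} (hx : 1 ≤ x) :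
    exp (-(2 * √(log x)) ^ 2 / 2) = (x ^ 2)⁻¹ := by
  rw [mul_pow, sq_sqrt (log_nonneg hx), show -(2 ^ 2 * log x) / 2 = -(2 * log x) by ring,
    exp_neg, show 2 * log x = log (x ^ 2) by rw [log_pow]; norm_num, exp_log (by positivity)]

lemma one_half_le_one_sub_two_div_sq_pow {P : ℕ} (hP : 2 ≤ P) :
    1 / 2 ≤ (1 - 2 / (P : ℝ) ^ 2) ^ (P - 1) := by
  have hP' : (2 : ℝ) ≤ P := by exact_mod_cast hP
  have hsmall : ((P : ℝ) - 1) * (2 / (P : ℝ) ^ 2) ≤ 1 / 2 := by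
    rw [mul_div_assoc', div_le_iff₀ (by positivity)]; nlinarith
  have hbernoulli := one_add_mul_le_pow (a := -(2 / (P : ℝ) ^ 2)) (by nlinarith) (P - 1)
  rw [Nat.cast_sub (by omega), Nat.cast_one, ← sub_eq_add_neg] at hbernoulli
  linarith

lemma one_div_three_le_inv_sqrt_two_pi : 1 / 3 ≤ (√(2 * π))⁻¹ := by
  rw [one_div, inv_le_inv₀ (by norm_num) (by positivity), sqrt_le_left (by norm_num)]
  nlinarith [pi_le_four]

lemma one_div_eight_le_exp_neg_two : 1 / 8 ≤ exp (-2) := by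
  rw [exp_neg, one_div, inv_le_inv₀ (by norm_num) (by positivity),
    show (2 : ℝ) = 1 + 1 by norm_num, exp_add]
  nlinarith [exp_one_lt_d9, exp_pos 1]

lemma neg_two_le_eight_mul_sq_sub_sq {c r x : ℝ} (hr : 0 ≤ r) (hrc : r ≤ 3 / 2 * c)
    (hx : 0 ≤ x) :
    -2 ≤ 8 * c ^ 2 * x ^ 2 - (r * (2 * x) + 1) ^ 2 / 2 := by
  have hsq : (r * x) ^ 2 ≤ (3 / 2 * c * x) ^ 2 :=
    pow_le_pow_left₀ (mul_nonneg hr hx) (mul_le_mul_of_nonneg_right hrc hx) 2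
  nlinarith [sq_nonneg (r * x - 9 / 14)]

lemma one_le_mul_rpow_mul_gapProbBound {c : ℝ} (hc : 1 ≤ c) {P : ℕ} (hP : 2 ≤ P) :
    1 ≤ 48 * (P : ℝ) ^ (8 * c ^ 2)
      * gapProbBound P ((1 + 2 * c) / (1 + c)) (2 * √(log P)) := by
  have hP' : (1 : ℝ) ≤ P := by exact_mod_cast (by omega : 1 ≤ P)
  set r := (1 + 2 * c) / (1 + c)
  set x := √(log P)
  have hr : 0 ≤ r := by positivity
  have hrpow : (P : ℝ) ^ (8 * c ^ 2) = exp (8 * c ^ 2 * x ^ 2) := by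
    rw [sq_sqrt (log_nonneg hP'), rpow_def_of_pos (by positivity), mul_comm]
  have hdensity :
      1 / 24
        ≤ (√(2 * π))⁻¹ * exp (-(r * (2 * x) + 1) ^ 2 / 2) * exp (8 * c ^ 2 * x ^ 2) := by
    rw [mul_assoc, ← exp_add]
    have : exp (-2) ≤ exp (-(r * (2 * x) + 1) ^ 2 / 2 + 8 * c ^ 2 * x ^ 2) := by
      gcongr
      linarith [neg_two_le_eight_mul_sq_sub_sq hr (div_le_three_halves_mul hc)
        (sqrt_nonneg (log P))]
    calc (1 : ℝ) / 24 = 1 / 3 * (1 / 8) := by norm_num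
      _ ≤ _ := by
          gcongr
          exacts [one_div_three_le_inv_sqrt_two_pi, one_div_eight_le_exp_neg_two.trans this]
  have hothers : 1 / 2 ≤ (1 - 2 * exp (-(2 * x) ^ 2 / 2)) ^ (P - 1) := by
    rw [exp_neg_two_sqrt_log_sq_div_two hP', ← div_eq_mul_inv]
    exact one_half_le_one_sub_two_div_sq_pow hP
  rw [gapProbBound, hrpow]
  nlinarith

lemma log_add_log_le_mul {c : ℝ} (hc : 1 ≤ c) {P m : ℕ} (hP : 2 ≤ P) {δ ρ : ℝ}
    (hδ : 0 < δ)
    (hρ : 1 ≤ 48 * (P : ℝ) ^ (8 * c ^ 2) * ρ)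
    (hm : 400 * c * (P : ℝ) ^ (8 * c ^ 2) * √(log P) * log (max (P : ℝ) (1 / δ)) ≤ m) :
    log P + log (1 / δ) ≤ ρ * m := by
  set L := log (max (P : ℝ) (1 / δ))
  have hP' : (2 : ℝ) ≤ P := by exact_mod_cast hP
  have hlogP : log P ≤ L := log_le_log (by positivity) (le_max_left _ _)
  have hlogδ : log (1 / δ) ≤ L := log_le_log (by positivity) (le_max_right _ _)
  have hL : 0 ≤ L := (log_nonneg (by linarith)).trans hlogP
  have hsqrt : 1 / 2 ≤ √(log P) :=
    le_sqrt_of_sq_le (by linarith [log_two_gt_d9, log_le_log two_pos hP'])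
  have hρ0 : 0 ≤ ρ := by
    by_contra! h
    nlinarith [rpow_pos_of_pos (by positivity : (0 : ℝ) < P) (8 * c ^ 2)]
  have hcsqrt : 1 / 2 ≤ c * √(log P) := by nlinarith
  calc log P + log (1 / δ) ≤ 1 * (25 / 3 * (c * √(log P)) * L) := by nlinarith
    _ ≤ 48 * (P : ℝ) ^ (8 * c ^ 2) * ρ * (25 / 3 * (c * √(log P)) * L) := by gcongr
    _ = ρ * (400 * c * (P : ℝ) ^ (8 * c ^ 2) * √(log P) * L) := by ring
    _ ≤ ρ * m := mul_le_mul_of_nonneg_left hm hρ0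

/-- existence of good neurons at initialization.
Let `δ ∈ (0,1)`, `c ≥ 1`, `2 ≤ P ≤ d`, and let `v₁, …, v_m` be i.i.d. uniform on the
sphere `S^{d−1}`. If `m ≥ 400 c P^{8c²} √(log P) log(max(P, 1/δ))`, then with probability
at least `1 − δ`, for every `p ∈ [P]` there exists `i ∈ [m]` with
`|v_{i,p}| / max_{q∈[P]\{p}} |v_{i,q}| ≥ (1+2c)/(1+c)`. -/
theorem existence_of_good_neurons (δ : ℝ) (hδ : δ ∈ Set.Ioo (0 : ℝ) 1)
    (c : ℝ) (hc : 1 ≤ c) (P d m : ℕ) (hP : 2 ≤ P) (hPd : P ≤ d)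
    (hm : 400 * c * (P : ℝ) ^ (8 * c ^ 2) * Real.sqrt (Real.log P)
        * Real.log (max (P : ℝ) (1 / δ)) ≤ m) :
    ENNReal.ofReal (1 - δ)
      ≤ (Measure.pi fun _ : Fin m => unifSphere d)
          {V | ∀ p : Fin P, ∃ i : Fin m,
            (1 + 2 * c) / (1 + c)
              ≤ |V i (Fin.castLE hPd p)|
                / (⨆ q : {q : Fin P // q ≠ p}, |V i (Fin.castLE hPd (q : Fin P))|)} := by
  have : Nontrivial (Fin P) := Fin.nontrivial_iff_two_le.mpr hP
  set r := (1 + 2 * c) / (1 + c)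
  set t := 2 * √(log P)
  set ρ := gapProbBound P r t
  have ht : 2 * exp (-t ^ 2 / 2) ≤ 1 := by
    have hP' : (2 : ℝ) ≤ P := by exact_mod_cast hP
    rw [exp_neg_two_sqrt_log_sq_div_two (by linarith), ← div_eq_mul_inv,
      div_le_one (by positivity)]
    nlinarith
  have hgood : ∀ p : Fin P, ENNReal.ofReal ρ
      ≤ unifSphere d {v | r ≤ peakRatio (fun q => v (Fin.castLE hPd q)) p} := fun p => by
    simpa using ofReal_gapProbBound_le_unifSphere_setOf_le_peakRatio
      (Fin.castLE_injective hPd) p (by positivity) (by positivity) ht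
  have hfail : P * (1 - ρ) ^ m ≤ δ :=
    mul_one_sub_pow_le_of_log_add_log_le (by positivity) hδ.1 (gapProbBound_le_one P r ht)
      (log_add_log_le_mul hc hP hδ.1 (one_le_mul_rpow_mul_gapProbBound hc hP) hm)
  calc ENNReal.ofReal (1 - δ) ≤ ENNReal.ofReal (1 - P * (1 - ρ) ^ m) := by
        gcongr
    _ ≤ _ := by
        have := ofReal_one_sub_le_pi_setOf_forall_exists_mem (ι := Fin m) (unifSphere d)
          (fun p => measurableSet_le_peakRatio (Fin.castLE hPd) p r)
          (gapProbBound_nonneg P r ht) (gapProbBound_le_one P r ht) hgood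
        rwa [Fintype.card_fin, Fintype.card_fin] at this

end
end

section
/- Let (Ω, F, (F_t)_{t∈ℕ}, P) be a filtered probability space and let (Z_t)_{t≥1} be an adapted martingale difference sequence. Suppose there exist M, σ > 0 such that for every t ≥ 0: on the event { sup_{s≤t} |Σ_{r=1}^s Z_r| ≤ M } one has E[Z_{t+1}² | F_t] ≤ σ². Then for every T ∈ ℕ, P( sup_{t≤T} |Σ_{s=1}^t Z_s| > M ) ≤ T σ² / M². -/
/-!
Let `τ` be the first time the partial sums `S_t = Z_1 + ⋯ + Z_t` leave `[-M, M]`. The increments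
`1_{t < τ} Z_{t+1}` of the stopped sums `S_{t ∧ τ}` are again martingale differences, hence
orthogonal in `L²`, and `{t < τ}` is exactly the event on which the variance hypothesis applies;
so `E[S_{T ∧ τ}²] ≤ T σ²`. If `|S_t| > M` for some `t ≤ T`, then `τ ≤ T` and
`|S_{T ∧ τ}| = |S_τ| > M`, and Chebyshev's inequality for `S_{T ∧ τ}` concludes.
-/

open MeasureTheory

noncomputable section

section

variable {Ω : Type*} {m m0 : MeasurableSpace Ω} {μ : Measure Ω} [IsFiniteMeasure μ]

theorem integral_mul_eq_zero_of_condExp_eq_zero (hm : m ≤ m0) {g X : Ω → ℝ}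
    (hg : StronglyMeasurable[m] g) (hg2 : MemLp g 2 μ) (hX2 : MemLp X 2 μ)
    (hX : μ[X|m] =ᵐ[μ] 0) :
    ∫ ω, g ω * X ω ∂μ = 0 := by
  have hgX : Integrable (g * X) μ := hg2.integrable_mul hX2
  calc ∫ ω, g ω * X ω ∂μ = ∫ ω, (μ[g * X|m]) ω ∂μ := (integral_condExp hm).symm
    _ = ∫ ω, g ω * (μ[X|m]) ω ∂μ :=
        integral_congr_ae <|
          condExp_mul_of_stronglyMeasurable_left hg hgX (hX2.integrable one_le_two)
    _ = 0 := by
        rw [integral_congr_ae (hX.mono fun ω h => show g ω * (μ[X|m]) ω = 0 by simp [h])]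
        simp

theorem integral_add_sq_of_condExp_eq_zero (hm : m ≤ m0) {g X : Ω → ℝ}
    (hg : StronglyMeasurable[m] g) (hg2 : MemLp g 2 μ) (hX2 : MemLp X 2 μ)
    (hX : μ[X|m] =ᵐ[μ] 0) :
    ∫ ω, (g ω + X ω) ^ 2 ∂μ = ∫ ω, g ω ^ 2 ∂μ + ∫ ω, X ω ^ 2 ∂μ := by
  have hexpand : (fun ω => (g ω + X ω) ^ 2) =
      fun ω => g ω ^ 2 + (2 * (g ω * X ω) + X ω ^ 2) := by
    ext ω; ring
  have hcross : Integrable (fun ω => 2 * (g ω * X ω)) μ := (hg2.integrable_mul hX2).const_mul 2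
  have hrest : Integrable (fun ω => 2 * (g ω * X ω) + X ω ^ 2) μ :=
    hcross.add hX2.integrable_sq
  rw [hexpand, integral_add hg2.integrable_sq hrest, integral_add hcross hX2.integrable_sq,
    integral_const_mul, integral_mul_eq_zero_of_condExp_eq_zero hm hg hg2 hX2 hX]
  ring

theorem setIntegral_le_measureReal_mul_of_condExp_le (hm : m ≤ m0) {f : Ω → ℝ}
    (hf : Integrable f μ) {s : Set Ω} (hs : MeasurableSet[m] s) {c : ℝ}
    (hc : ∀ᵐ ω ∂μ, ω ∈ s → (μ[f|m]) ω ≤ c) :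
    ∫ ω in s, f ω ∂μ ≤ μ.real s * c := by
  rw [← setIntegral_condExp hm hf hs, ← smul_eq_mul, ← setIntegral_const]
  exact setIntegral_mono_on_ae integrable_condExp.integrableOn
    (integrableOn_const (measure_ne_top _ _)) (hm s hs) hc

end

namespace StoppedPartialSum

variable {Ω : Type*} {m0 : MeasurableSpace Ω}

def partialSum (Z : ℕ → Ω → ℝ) (t : ℕ) (ω : Ω) : ℝ :=
  ∑ r ∈ Finset.range t, Z (r + 1) ω

/-- The event `{t < τ}`. -/
def boundedUpTo (Z : ℕ → Ω → ℝ) (M : ℝ) (t : ℕ) : Set Ω :=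
  {ω | ∀ s ≤ t, |partialSum Z s ω| ≤ M}

/-- The stopped sum `S_{t ∧ τ}`. -/
def stoppedSum (Z : ℕ → Ω → ℝ) (M : ℝ) (t : ℕ) (ω : Ω) : ℝ :=
  ∑ r ∈ Finset.range t, (boundedUpTo Z M r).indicator (Z (r + 1)) ω

variable {Z : ℕ → Ω → ℝ} {M : ℝ}

theorem stoppedSum_succ (t : ℕ) (ω : Ω) :
    stoppedSum Z M (t + 1) ω =
      stoppedSum Z M t ω + (boundedUpTo Z M t).indicator (Z (t + 1)) ω :=
  Finset.sum_range_succ _ _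

theorem stoppedSum_eq_partialSum {t : ℕ} {ω : Ω} (h : ∀ s < t, |partialSum Z s ω| ≤ M) :
    stoppedSum Z M t ω = partialSum Z t ω := by
  refine Finset.sum_congr rfl fun r hr => Set.indicator_of_mem ?_ _
  exact fun s hs => h s (hs.trans_lt (Finset.mem_range.mp hr))

theorem stoppedSum_eq_of_lt_abs {t T : ℕ} (htT : t ≤ T) {ω : Ω}
    (ht : M < |partialSum Z t ω|) :
    stoppedSum Z M T ω = stoppedSum Z M t ω := by
  refine (Finset.sum_subset (Finset.range_subset_range.mpr htT) fun r _ hr => ?_).symm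
  refine Set.indicator_of_notMem (fun hbdd => ?_) _
  exact (hbdd t (by simpa using hr)).not_gt ht

theorem lt_abs_stoppedSum {T : ℕ} {ω : Ω} (h : ∃ t ≤ T, M < |partialSum Z t ω|) :
    M < |stoppedSum Z M T ω| := by
  classical
  obtain ⟨t, htT, ht⟩ := h
  have hexit : ∃ t, M < |partialSum Z t ω| := ⟨t, ht⟩
  have hfirst : ∀ s < Nat.find hexit, |partialSum Z s ω| ≤ M := fun s hs =>
    not_lt.mp (Nat.find_min hexit hs)
  rw [stoppedSum_eq_of_lt_abs ((Nat.find_min' hexit ht).trans htT) (Nat.find_spec hexit),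
    stoppedSum_eq_partialSum hfirst]
  exact Nat.find_spec hexit

variable {F : Filtration ℕ m0}

theorem stronglyMeasurable_partialSum (hZ : ∀ t, StronglyMeasurable[F t] (Z t)) (t : ℕ) :
    StronglyMeasurable[F t] (partialSum Z t) :=
  Finset.stronglyMeasurable_fun_sum _ fun r hr =>
    (hZ (r + 1)).mono (F.mono (Finset.mem_range.mp hr))

theorem measurableSet_boundedUpTo (hZ : ∀ t, StronglyMeasurable[F t] (Z t)) (M : ℝ) (t : ℕ) :
    MeasurableSet[F t] (boundedUpTo Z M t) := by
  have : boundedUpTo Z M t =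
      ⋂ s ∈ Set.Iic t, (fun ω => |partialSum Z s ω|) ⁻¹' Set.Iic M := by
    ext ω; simp [boundedUpTo]
  rw [this]
  exact MeasurableSet.biInter (Set.to_countable _) fun s hs =>
    (measurable_abs.comp ((stronglyMeasurable_partialSum hZ s).mono (F.mono hs)).measurable)
      measurableSet_Iic

theorem stronglyMeasurable_stoppedSum (hZ : ∀ t, StronglyMeasurable[F t] (Z t)) (M : ℝ)
    (t : ℕ) : StronglyMeasurable[F t] (stoppedSum Z M t) :=
  Finset.stronglyMeasurable_fun_sum _ fun r hr =>
    have hrt := Finset.mem_range.mp hr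
    ((hZ (r + 1)).mono (F.mono hrt)).indicator
      (F.mono hrt.le _ (measurableSet_boundedUpTo hZ M r))

variable {μ : Measure Ω}

theorem memLp_stoppedSum (hZ : ∀ t, StronglyMeasurable[F t] (Z t)) (hL2 : ∀ t, MemLp (Z t) 2 μ)
    (M : ℝ) (t : ℕ) : MemLp (stoppedSum Z M t) 2 μ :=
  memLp_finsetSum _ fun r _ =>
    (hL2 (r + 1)).indicator (F.le r _ (measurableSet_boundedUpTo hZ M r))

theorem integral_sq_stoppedSum_le [IsProbabilityMeasure μ]
    (hZ : ∀ t, StronglyMeasurable[F t] (Z t)) (hL2 : ∀ t, MemLp (Z t) 2 μ)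
    (hmds : ∀ t, μ[Z (t + 1)|F t] =ᵐ[μ] 0) {σ : ℝ}
    (hvar : ∀ t, ∀ᵐ ω ∂μ,
      ω ∈ boundedUpTo Z M t → (μ[fun ω' => Z (t + 1) ω' ^ 2|F t]) ω ≤ σ ^ 2)
    (t : ℕ) :
    ∫ ω, stoppedSum Z M t ω ^ 2 ∂μ ≤ t * σ ^ 2 := by
  induction t with
  | zero => simp [stoppedSum]
  | succ t ih =>
    set B := boundedUpTo Z M t
    have hB : MeasurableSet[F t] B := measurableSet_boundedUpTo hZ M t
    have hincrement : μ[B.indicator (Z (t + 1))|F t] =ᵐ[μ] 0 := by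
      filter_upwards [condExp_indicator ((hL2 (t + 1)).integrable one_le_two) hB, hmds t]
        with ω hind hzero
      simp [hind, hzero]
    have hvar_B : ∫ ω, B.indicator (Z (t + 1)) ω ^ 2 ∂μ ≤ σ ^ 2 := by
      have hsq : (fun ω => B.indicator (Z (t + 1)) ω ^ 2) =
          B.indicator fun ω => Z (t + 1) ω ^ 2 := by
        ext ω; by_cases h : ω ∈ B <;> simp [h]
      rw [hsq, integral_indicator (F.le t _ hB)]
      calc ∫ ω in B, Z (t + 1) ω ^ 2 ∂μ ≤ μ.real B * σ ^ 2 :=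
            setIntegral_le_measureReal_mul_of_condExp_le (F.le t) (hL2 (t + 1)).integrable_sq hB
              (hvar t)
        _ ≤ σ ^ 2 := mul_le_of_le_one_left (sq_nonneg σ) measureReal_le_one
    simp_rw [stoppedSum_succ]
    rw [integral_add_sq_of_condExp_eq_zero (F.le t) (stronglyMeasurable_stoppedSum hZ M t)
      (memLp_stoppedSum hZ hL2 M t) ((hL2 (t + 1)).indicator (F.le t _ hB)) hincrement]
    push_cast
    linarith

end StoppedPartialSum

open StoppedPartialSum in
theorem doob_with_stochastic_induction_general {Ω : Type*} {m0 : MeasurableSpace Ω}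
    (μ : Measure Ω) [IsProbabilityMeasure μ] (F : Filtration ℕ m0)
    (Z : ℕ → Ω → ℝ)
    (hadapted : ∀ t, StronglyMeasurable[F t] (Z t))
    (hL2 : ∀ t, MemLp (Z t) 2 μ)
    (hmds : ∀ t, μ[Z (t + 1)|F t] =ᵐ[μ] 0)
    (M σ : ℝ) (hM : 0 < M)
    (hvar : ∀ t, ∀ᵐ ω ∂μ,
      (∀ s ≤ t, |∑ r ∈ Finset.range s, Z (r + 1) ω| ≤ M) →
      (μ[fun ω' => (Z (t + 1) ω') ^ 2|F t]) ω ≤ σ ^ 2)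
    (T : ℕ) :
    μ {ω | ∃ t ≤ T, M < |∑ s ∈ Finset.range t, Z (s + 1) ω|}
      ≤ ENNReal.ofReal (T * σ ^ 2 / M ^ 2) := by
  set S := stoppedSum Z M T
  have hexit : {ω | ∃ t ≤ T, M < |∑ s ∈ Finset.range t, Z (s + 1) ω|} ⊆
      {ω | M ^ 2 ≤ S ω ^ 2} :=
    fun ω hω => (pow_le_pow_left₀ hM.le (lt_abs_stoppedSum hω).le 2).trans_eq (sq_abs _)
  have hchebyshev :=
    mul_meas_ge_le_integral_of_nonneg (ae_of_all _ fun ω => sq_nonneg (S ω))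
      (memLp_stoppedSum hadapted hL2 M T).integrable_sq (M ^ 2)
  have hmoment := integral_sq_stoppedSum_le hadapted hL2 hmds hvar T
  calc μ {ω | ∃ t ≤ T, M < |∑ s ∈ Finset.range t, Z (s + 1) ω|}
      ≤ μ {ω | M ^ 2 ≤ S ω ^ 2} := measure_mono hexit
    _ = ENNReal.ofReal (μ.real {ω | M ^ 2 ≤ S ω ^ 2}) := (ofReal_measureReal).symm
    _ ≤ ENNReal.ofReal (T * σ ^ 2 / M ^ 2) := by
      refine ENNReal.ofReal_le_ofReal ?_
      rw [le_div_iff₀ (by positivity)]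
      linarith

/-- Doob inequality with an induction-style variance hypothesis.
Let `(Z_t)_{t≥1}` be a martingale difference sequence such that, on the event that all
partial sums up to time `t` are bounded by `M`, the conditional variance of `Z_{t+1}`
given `F_t` is at most `σ²`. Then `P( sup_{t≤T} |Σ_{s=1}^t Z_s| > M ) ≤ T σ²/M²`. -/
theorem doob_with_stochastic_induction {Ω : Type*} {m0 : MeasurableSpace Ω}
    (μ : Measure Ω) [IsProbabilityMeasure μ] (F : Filtration ℕ m0)
    (Z : ℕ → Ω → ℝ)
    (hadapted : ∀ t, StronglyMeasurable[F t] (Z t))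
    (hL2 : ∀ t, MemLp (Z t) 2 μ)
    (hmds : ∀ t, μ[Z (t + 1)|F t] =ᵐ[μ] 0)
    (M σ : ℝ) (hM : 0 < M) (hσ : 0 < σ)
    (hvar : ∀ t, ∀ᵐ ω ∂μ,
      (∀ s ≤ t, |∑ r ∈ Finset.range s, Z (r + 1) ω| ≤ M) →
      (μ[fun ω' => (Z (t + 1) ω') ^ 2|F t]) ω ≤ σ ^ 2)
    (T : ℕ) :
    μ {ω | ∃ t ≤ T, M < |∑ s ∈ Finset.range t, Z (s + 1) ω|}
      ≤ ENNReal.ofReal (T * σ ^ 2 / M ^ 2) :=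
  doob_with_stochastic_induction_general μ F Z hadapted hL2 hmds M σ hM hvar T

end
end

section
/- (Stochastic Gronwall with zero drift.) Let (X_t) be an adapted process on a filtered probability space satisfying X_{t+1} = X_t + ξ_{t+1} + Z_{t+1}, X₀ = x₀, where (ξ_t) is adapted and (Z_t) is a martingale difference sequence. Let T ∈ ℕ and δ ∈ (0,1), and set M := T Ξ + √(T σ² / δ). Suppose there exist δ_ξ ∈ (0,1) and Ξ, σ > 0 such that for every t ≤ T, on the event { |X_s − x₀| ≤ M for all s ≤ t }: P( |ξ_{t+1}| > Ξ | F_t ) ≤ δ_ξ and E[Z_{t+1}² | F_t] ≤ σ². Then P( sup_{t≤T} |X_t − x₀| ≤ M ) ≥ 1 − T δ_ξ − δ. -/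
/-!
Let `G t` be the event that `X` has stayed within distance `M` of `x₀` up to time `t`, and
let `Y t = ∑_{s<t} 1_{G s} Z (s+1)` be the martingale `∑ Z` stopped when `X` leaves that ball.
Its increments are orthogonal in `L²`, so `E[(Y T)²] = ∑_{s<T} E[1_{G s} Z(s+1)²] ≤ Tσ²`, and
Chebyshev bounds `P(|Y T| ≥ √(Tσ²/δ))` by `δ`. If `X` leaves the ball by time `T`, look at the
first exit time `u ≤ T`: either some jump `ξ (s+1)` with `s < u` exceeds `Ξ` while `X` was still
inside, which has probability at most `δ_ξ` for each of the `T` values of `s`, or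
`M < |X u - x₀| ≤ uΞ + |Y T|`, because `Y T` is exactly the martingale part of `X u - x₀`.
The latter is why no maximal inequality is needed: the stopped martingale at the final time
already sees the exit.
-/

open MeasureTheory Finset

noncomputable section

section

variable {Ω : Type*} {m0 : MeasurableSpace Ω} {μ : Measure Ω}

lemma integral_add_sq_of_integral_mul_eq_zero {Y W : Ω → ℝ} (hY : MemLp Y 2 μ)
    (hW : MemLp W 2 μ) (hYW : ∫ ω, Y ω * W ω ∂μ = 0) :
    ∫ ω, (Y ω + W ω) ^ 2 ∂μ = ∫ ω, Y ω ^ 2 ∂μ + ∫ ω, W ω ^ 2 ∂μ := by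
  have hYW' : Integrable (fun ω => 2 * (Y ω * W ω)) μ := (hY.integrable_mul hW).const_mul 2
  simp_rw [add_sq', mul_assoc]
  rw [integral_add (f := fun ω => Y ω ^ 2 + W ω ^ 2) (hY.integrable_sq.add hW.integrable_sq) hYW',
    integral_add hY.integrable_sq hW.integrable_sq, integral_const_mul, hYW, mul_zero, add_zero]

lemma measureReal_abs_ge_le_of_integral_sq_le {Y : Ω → ℝ} {c δ : ℝ} (hY : MemLp Y 2 μ)
    (hc : 0 < c) (hYc : ∫ ω, Y ω ^ 2 ∂μ ≤ c ^ 2 * δ) : μ.real {ω | c ≤ |Y ω|} ≤ δ := by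
  have hmarkov := mul_meas_ge_le_integral_of_nonneg (ae_of_all _ fun ω => sq_nonneg (Y ω))
    hY.integrable_sq (c ^ 2)
  have hset : {ω | c ≤ |Y ω|} = {ω | c ^ 2 ≤ Y ω ^ 2} := by
    ext ω
    rw [Set.mem_ofPred_eq, Set.mem_ofPred_eq, ← sq_abs (Y ω), sq_le_sq₀ hc.le (abs_nonneg _)]
  rw [hset]
  refine le_of_mul_le_mul_left ?_ (by positivity : 0 < c ^ 2)
  linarith

lemma ofReal_one_sub_le_of_measureReal_compl_le [IsProbabilityMeasure μ] {s : Set Ω} {ε : ℝ}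
    (hs : MeasurableSet s) (hε : μ.real sᶜ ≤ ε) : ENNReal.ofReal (1 - ε) ≤ μ s := by
  rw [probReal_compl_eq_one_sub hs] at hε
  rw [ENNReal.ofReal_le_iff_le_toReal (measure_ne_top _ _)]
  exact sub_le_comm.mp hε

end

section

variable {Ω : Type*} {m m0 : MeasurableSpace Ω} {μ : Measure Ω} [IsFiniteMeasure μ]

lemma setIntegral_le_of_condExp_le (hm : m ≤ m0) {f : Ω → ℝ} {s : Set Ω} {c : ℝ}
    (hf : Integrable f μ) (hs : MeasurableSet[m] s) (hfc : ∀ᵐ ω ∂μ, ω ∈ s → μ[f|m] ω ≤ c) :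
    ∫ ω in s, f ω ∂μ ≤ c * μ.real s := by
  rw [← setIntegral_condExp hm hf hs]
  calc ∫ ω in s, μ[f|m] ω ∂μ ≤ ∫ _ in s, c ∂μ :=
        setIntegral_mono_on_ae integrable_condExp.integrableOn (integrable_const c).integrableOn
          (hm s hs) hfc
    _ = c * μ.real s := by rw [setIntegral_const, smul_eq_mul, mul_comm]

lemma measureReal_inter_le_of_condExp_indicator_le (hm : m ≤ m0) {s t : Set Ω} {c : ℝ}
    (hs : MeasurableSet[m] s) (ht : MeasurableSet t)
    (hc : ∀ᵐ ω ∂μ, ω ∈ s → μ[t.indicator (fun _ => (1 : ℝ))|m] ω ≤ c) :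
    μ.real (s ∩ t) ≤ c * μ.real s := by
  have h := setIntegral_le_of_condExp_le hm ((integrable_const 1).indicator ht) hs hc
  rwa [setIntegral_indicator ht, setIntegral_const, smul_eq_mul, mul_one] at h

lemma integral_mul_eq_zero_of_condExp_eq_zero_s16 (hm : m ≤ m0) {V Z : Ω → ℝ}
    (hV : StronglyMeasurable[m] V) (hVZ : Integrable (V * Z) μ) (hZ : Integrable Z μ)
    (hZ0 : μ[Z|m] =ᵐ[μ] 0) : ∫ ω, V ω * Z ω ∂μ = 0 := by
  have h : μ[V * Z|m] =ᵐ[μ] 0 := by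
    filter_upwards [condExp_mul_of_stronglyMeasurable_left hV hVZ hZ, hZ0] with ω h h0
    simp [h, h0]
  change ∫ ω, (V * Z) ω ∂μ = 0
  rw [← integral_condExp hm, integral_congr_ae h, Pi.zero_def, integral_zero]

end

def indicatorTransform {Ω : Type*} (G : ℕ → Set Ω) (Z : ℕ → Ω → ℝ) (t : ℕ) : Ω → ℝ :=
  ∑ s ∈ range t, (G s).indicator (Z (s + 1))

section

variable {Ω : Type*} {m0 : MeasurableSpace Ω} {μ : Measure Ω} {F : Filtration ℕ m0}
  {G : ℕ → Set Ω} {Z : ℕ → Ω → ℝ}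

lemma indicatorTransform_succ (t : ℕ) :
    indicatorTransform G Z (t + 1) = indicatorTransform G Z t + (G t).indicator (Z (t + 1)) :=
  sum_range_succ _ _

lemma indicatorTransform_apply_eq_sum_range {ω : Ω} {u T : ℕ} (huT : u ≤ T)
    (hG : ∀ s < T, ω ∈ G s ↔ s < u) :
    indicatorTransform G Z T ω = ∑ s ∈ range u, Z (s + 1) ω := by
  rw [indicatorTransform, Finset.sum_apply, ← sum_range_add_sum_Ico _ huT]
  have hbefore : ∀ s ∈ range u, (G s).indicator (Z (s + 1)) ω = Z (s + 1) ω := fun s hs =>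
    Set.indicator_of_mem ((hG s (by grind)).mpr (mem_range.mp hs)) _
  have hafter : ∀ s ∈ Ico u T, (G s).indicator (Z (s + 1)) ω = 0 := fun s hs =>
    Set.indicator_of_notMem (fun h => by grind) _
  rw [sum_congr rfl hbefore, sum_eq_zero hafter, add_zero]

lemma stronglyAdapted_indicatorTransform (hG : ∀ t, MeasurableSet[F t] (G t))
    (hZ : StronglyAdapted F Z) : StronglyAdapted F (indicatorTransform G Z) := fun _ =>
  Finset.stronglyMeasurable_sum _ fun s hs =>
    ((hZ (s + 1)).mono (F.mono (mem_range.mp hs))).indicator (F.mono (mem_range.mp hs).le _ (hG s))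

lemma memLp_indicatorTransform {p : ENNReal} (hG : ∀ t, MeasurableSet (G t))
    (hZ : ∀ t, MemLp (Z t) p μ) (t : ℕ) : MemLp (indicatorTransform G Z t) p μ :=
  memLp_finsetSum' _ fun s _ => (hZ (s + 1)).indicator (hG s)

lemma integral_indicatorTransform_sq [IsFiniteMeasure μ] (hG : ∀ t, MeasurableSet[F t] (G t))
    (hZ : StronglyAdapted F Z) (hZL2 : ∀ t, MemLp (Z t) 2 μ)
    (hmds : ∀ t, μ[Z (t + 1)|F t] =ᵐ[μ] 0) (t : ℕ) :
    ∫ ω, indicatorTransform G Z t ω ^ 2 ∂μ = ∑ s ∈ range t, ∫ ω in G s, Z (s + 1) ω ^ 2 ∂μ := by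
  have hGm : ∀ t, MeasurableSet (G t) := fun t => F.le t _ (hG t)
  induction t with
  | zero => simp [indicatorTransform]
  | succ t ih =>
    set Y := indicatorTransform G Z t
    have hYL2 : MemLp Y 2 μ := memLp_indicatorTransform hGm hZL2 t
    have hWL2 : MemLp ((G t).indicator (Z (t + 1))) 2 μ := (hZL2 (t + 1)).indicator (hGm t)
    have horth : ∫ ω, Y ω * (G t).indicator (Z (t + 1)) ω ∂μ = 0 := by
      have hV : StronglyMeasurable[F t] ((G t).indicator Y) :=
        (stronglyAdapted_indicatorTransform hG hZ t).indicator (hG t)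
      simp_rw [← Set.indicator_mul_right, Set.indicator_mul_left]
      exact integral_mul_eq_zero_of_condExp_eq_zero_s16 (F.le t) hV
        ((hYL2.indicator (hGm t)).integrable_mul (hZL2 (t + 1)))
        ((hZL2 (t + 1)).integrable one_le_two) (hmds t)
    simp only [indicatorTransform_succ, Pi.add_apply]
    rw [integral_add_sq_of_integral_mul_eq_zero hYL2 hWL2 horth, ih, sum_range_succ]
    simp_rw [sq, ← Set.indicator_mul, integral_indicator (hGm t)]

lemma integral_indicatorTransform_sq_le [IsProbabilityMeasure μ]
    (hG : ∀ t, MeasurableSet[F t] (G t)) (hZ : StronglyAdapted F Z)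
    (hZL2 : ∀ t, MemLp (Z t) 2 μ) (hmds : ∀ t, μ[Z (t + 1)|F t] =ᵐ[μ] 0) {T : ℕ} {v : ℝ}
    (hv : 0 ≤ v) (hvar : ∀ t < T, ∀ᵐ ω ∂μ, ω ∈ G t → μ[fun ω' => Z (t + 1) ω' ^ 2|F t] ω ≤ v) :
    ∫ ω, indicatorTransform G Z T ω ^ 2 ∂μ ≤ T * v := by
  rw [integral_indicatorTransform_sq hG hZ hZL2 hmds]
  calc _ ≤ ∑ _s ∈ range T, v := sum_le_sum fun s hs =>
        (setIntegral_le_of_condExp_le (F.le s) (hZL2 (s + 1)).integrable_sq (hG s)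
          (hvar s (mem_range.mp hs))).trans (mul_le_of_le_one_right hv measureReal_le_one)
    _ = T * v := by rw [sum_const, card_range, nsmul_eq_mul]

end

section

variable {Ω : Type*}

def stayedWithin (X : ℕ → Ω → ℝ) (x₀ M : ℝ) (t : ℕ) : Set Ω :=
  {ω | ∀ s ≤ t, |X s ω - x₀| ≤ M}

lemma measurableSet_stayedWithin {m0 : MeasurableSpace Ω} {F : Filtration ℕ m0}
    {X : ℕ → Ω → ℝ} (hX : StronglyAdapted F X) (x₀ M : ℝ) (t : ℕ) :
    MeasurableSet[F t] (stayedWithin X x₀ M t) := by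
  simp only [stayedWithin, Set.ofPred_forall]
  refine MeasurableSet.iInter fun s => MeasurableSet.iInter fun hs => ?_
  have hXs : Measurable[F t] (X s) := ((hX s).mono (F.mono hs)).measurable
  exact (by fun_prop : Measurable[F t] fun ω => |X s ω - x₀|) measurableSet_Iic

lemma exists_jump_or_lt_abs_indicatorTransform {X ξ Z : ℕ → Ω → ℝ} {x₀ M Ξ : ℝ} {T : ℕ}
    {ω : Ω} (hX0 : X 0 ω = x₀) (hrec : ∀ t, X (t + 1) ω = X t ω + ξ (t + 1) ω + Z (t + 1) ω)
    (hΞ : 0 ≤ Ξ) (hω : ω ∉ stayedWithin X x₀ M T) :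
    (∃ t < T, ω ∈ stayedWithin X x₀ M t ∧ Ξ < |ξ (t + 1) ω|) ∨
      M - T * Ξ < |indicatorTransform (stayedWithin X x₀ M) Z T ω| := by
  simp only [stayedWithin, Set.mem_ofPred_eq, not_forall, not_le] at hω
  obtain ⟨v, hvT, hv⟩ := hω
  have hexit : ∃ u, M < |X u ω - x₀| := ⟨v, hv⟩
  set u := Nat.find hexit
  have huT : u ≤ T := (Nat.find_min' hexit hv).trans hvT
  have hstayed : ∀ s, ω ∈ stayedWithin X x₀ M s ↔ s < u := fun s =>
    ⟨fun h => lt_of_not_ge fun hus => (Nat.find_spec hexit).not_ge (h u hus),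
      fun hs r hr => not_lt.mp (Nat.find_min hexit (hr.trans_lt hs))⟩
  refine or_iff_not_imp_left.mpr fun hjump => ?_
  push Not at hjump
  have hξ : |∑ s ∈ range u, ξ (s + 1) ω| ≤ T * Ξ :=
    calc |∑ s ∈ range u, ξ (s + 1) ω| ≤ ∑ s ∈ range u, |ξ (s + 1) ω| := abs_sum_le_sum_abs _ _
      _ ≤ ∑ _s ∈ range u, Ξ := sum_le_sum fun s hs =>
          hjump s ((mem_range.mp hs).trans_le huT) ((hstayed s).mpr (mem_range.mp hs))
      _ = u * Ξ := by rw [sum_const, card_range, nsmul_eq_mul]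
      _ ≤ T * Ξ := by gcongr
  have hX : X u ω - x₀ = ∑ s ∈ range u, ξ (s + 1) ω + ∑ s ∈ range u, Z (s + 1) ω := by
    rw [← hX0, ← sum_range_sub (fun t => X t ω), ← sum_add_distrib]
    exact sum_congr rfl fun s _ => by rw [hrec]; ring
  rw [indicatorTransform_apply_eq_sum_range huT fun s _ => hstayed s]
  have hu : M < |X u ω - x₀| := Nat.find_spec hexit
  rw [hX] at hu
  linarith [abs_add_le (∑ s ∈ range u, ξ (s + 1) ω) (∑ s ∈ range u, Z (s + 1) ω)]

end

/-- stochastic Gronwall lemma with zero drift.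
Let `X_{t+1} = X_t + ξ_{t+1} + Z_{t+1}` with `X₀ = x₀`, `(ξ_t)` adapted, `(Z_t)` a
martingale difference sequence, and set `M = TΞ + √(Tσ²/δ)`. Assume that on the event
`{|X_s − x₀| ≤ M for all s ≤ t}` the conditional probability that `|ξ_{t+1}| > Ξ` is at
most `δ_ξ` and the conditional variance of `Z_{t+1}` is at most `σ²`. Then
`P( sup_{t≤T} |X_t − x₀| ≤ M ) ≥ 1 − T δ_ξ − δ`. -/
theorem stochastic_gronwall_zero_drift {Ω : Type*} {m0 : MeasurableSpace Ω}
    (μ : Measure Ω) [IsProbabilityMeasure μ] (F : Filtration ℕ m0)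
    (x₀ : ℝ) (X ξ Z : ℕ → Ω → ℝ)
    (hXadapted : StronglyAdapted F X) (hξadapted : StronglyAdapted F ξ) (hZadapted : StronglyAdapted F Z)
    (hZL2 : ∀ t, MemLp (Z t) 2 μ)
    (hmds : ∀ t, μ[Z (t + 1)|F t] =ᵐ[μ] 0)
    (hX0 : ∀ ω, X 0 ω = x₀)
    (hrec : ∀ t ω, X (t + 1) ω = X t ω + ξ (t + 1) ω + Z (t + 1) ω)
    (T : ℕ) (δ : ℝ) (hδ : δ ∈ Set.Ioo (0 : ℝ) 1)
    (δξ : ℝ) (hδξ : δξ ∈ Set.Ioo (0 : ℝ) 1)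
    (Ξ σ : ℝ) (hΞ : 0 < Ξ) (hσ : 0 < σ)
    (M : ℝ) (hM : M = T * Ξ + Real.sqrt (T * σ ^ 2 / δ))
    (hξbound : ∀ t, t ≤ T → ∀ᵐ ω ∂μ,
      (∀ s ≤ t, |X s ω - x₀| ≤ M) →
      (μ[Set.indicator {ω' | Ξ < |ξ (t + 1) ω'|} (fun _ => (1 : ℝ))|F t]) ω ≤ δξ)
    (hvar : ∀ t, t ≤ T → ∀ᵐ ω ∂μ,
      (∀ s ≤ t, |X s ω - x₀| ≤ M) →
      (μ[fun ω' => (Z (t + 1) ω') ^ 2|F t]) ω ≤ σ ^ 2) :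
    ENNReal.ofReal (1 - T * δξ - δ)
      ≤ μ {ω | ∀ t ≤ T, |X t ω - x₀| ≤ M} := by
  obtain ⟨hδ0, -⟩ := hδ
  obtain ⟨hδξ0, -⟩ := hδξ
  obtain rfl | hT := T.eq_zero_or_pos
  · simp [hM, hX0]
    linarith
  set G := stayedWithin X x₀ M
  set Y := indicatorTransform G Z
  set bigJump : ℕ → Set Ω := fun t => {ω | Ξ < |ξ (t + 1) ω|}
  set lam := √(T * σ ^ 2 / δ)
  have hGF : ∀ t, MeasurableSet[F t] (G t) := measurableSet_stayedWithin hXadapted x₀ M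
  have hjump : ∀ t < T, μ.real (G t ∩ bigJump t) ≤ δξ := fun t ht =>
    (measureReal_inter_le_of_condExp_indicator_le (F.le t) (hGF t)
      (measurableSet_lt measurable_const ((hξadapted (t + 1)).mono (F.le _)).measurable.abs)
      (hξbound t ht.le)).trans (mul_le_of_le_one_right hδξ0.le measureReal_le_one)
  have hchebyshev : μ.real {ω | lam ≤ |Y T ω|} ≤ δ := by
    have hTσ : 0 < T * σ ^ 2 / δ := by
      have : (0 : ℝ) < T := Nat.cast_pos.mpr hT
      positivity
    refine measureReal_abs_ge_le_of_integral_sq_le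
      (memLp_indicatorTransform (fun t => F.le t _ (hGF t)) hZL2 T) (Real.sqrt_pos.mpr hTσ) ?_
    rw [Real.sq_sqrt hTσ.le, div_mul_cancel₀ _ hδ0.ne']
    exact integral_indicatorTransform_sq_le hGF hZadapted hZL2 hmds (sq_nonneg σ)
      fun t ht => hvar t ht.le
  have hcover : (G T)ᶜ ⊆ (⋃ t ∈ range T, G t ∩ bigJump t) ∪ {ω | lam ≤ |Y T ω|} := by
    intro ω hω
    rcases exists_jump_or_lt_abs_indicatorTransform (hX0 ω) (hrec · ω) hΞ.le hω with
      ⟨t, ht, hGt, hξt⟩ | hY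
    · exact Or.inl (Set.mem_biUnion (mem_range.mpr ht) ⟨hGt, hξt⟩)
    · rw [show M - T * Ξ = lam by rw [hM]; ring] at hY
      exact Or.inr hY.le
  rw [sub_sub]
  refine ofReal_one_sub_le_of_measureReal_compl_le (F.le T _ (hGF T)) ?_
  calc μ.real (G T)ᶜ ≤ ∑ t ∈ range T, μ.real (G t ∩ bigJump t) + μ.real {ω | lam ≤ |Y T ω|} :=
        (measureReal_mono hcover).trans ((measureReal_union_le _ _).trans
          (add_le_add_left (measureReal_biUnion_finset_le _ _) _))
    _ ≤ ∑ _t ∈ range T, δξ + δ := add_le_add (sum_le_sum fun t ht => hjump t (mem_range.mp ht))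
        hchebyshev
    _ = T * δξ + δ := by rw [sum_const, card_range, nsmul_eq_mul]

end
end

section
/- (Deterministic polynomial Gronwall / blow-up time estimate.) Let p > 2, x₀ ∈ (0,1), and let (x_t)_{t∈ℕ} be defined by x_{t+1} = x_t + α x_t^p. Then there exist constants c_p, C_p > 0 depending only on p such that if 0 < α ≤ c_p/p, then there exists t ≤ C_p / (x₀^{p−1} α) with x_t ≥ 1/2; that is, the hitting time of level 1/2 is at most C_p / (x₀^{p−1} α). -/
noncomputable section

open Real

private lemma gronwall_decrement {p a α : ℝ} (hp : 2 < p) (ha : 0 < a) (ha2 : a < 1/2)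
    (hα : 0 < α) (hαp : α ≤ 1 / p) :
    (a + α * a ^ p) ^ (-(p-1)) ≤ a ^ (-(p-1)) - α / 2 := by
  set s : ℝ := α * a ^ (p - 1) with hs
  have hp0 : (0:ℝ) < p := by linarith
  have hap1 : (0:ℝ) < a ^ (p-1) := rpow_pos_of_pos ha _
  have hs0 : 0 < s := mul_pos hα hap1
  have hsle : s ≤ α := by
    have h1 : a ^ (p-1) ≤ 1 := rpow_le_one ha.le (by linarith) (by linarith)
    nlinarith
  have hsplit : a + α * a ^ p = a * (1 + s) := by
    have : a ^ p = a ^ (p - 1) * a := by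
      rw [← Real.rpow_add_one ha.ne' (p-1)]; ring_nf
    rw [this, hs]; ring
  have h1s : (0:ℝ) < 1 + s := by linarith
  have hmul : (a * (1 + s)) ^ (-(p-1)) = a ^ (-(p-1)) * (1 + s) ^ (-(p-1)) :=
    Real.mul_rpow ha.le h1s.le
  have hbern : 1 + (p-1) * s ≤ (1 + s) ^ (p-1) :=
    one_add_mul_self_le_rpow_one_add (by linarith) (by linarith)
  set D : ℝ := 1 + (p-1) * s with hD
  have hD1 : (1:ℝ) ≤ D := by nlinarith
  have hD0 : (0:ℝ) < D := by linarith
  have hinv : (1 + s) ^ (-(p-1)) ≤ D⁻¹ := by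
    rw [Real.rpow_neg h1s.le]
    exact inv_anti₀ hD0 hbern
  have hD2 : D ≤ 2 := by
    have h1 : s ≤ 1 / p := le_trans hsle hαp
    have h2 : (p-1) * s ≤ (p-1) * (1/p) :=
      mul_le_mul_of_nonneg_left h1 (by linarith)
    have h3 : (p-1) * (1/p) ≤ 1 := by
      rw [mul_one_div, div_le_one hp0]; linarith
    rw [hD]; linarith
  have haneg : a ^ (-(p-1)) = α / s := by
    rw [hs, div_mul_eq_div_div, div_self hα.ne', one_div, Real.rpow_neg ha.le]
  have keyeq : α / s - (α / s) * D⁻¹ = α * (p-1) / D := by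
    have hX : (1 - s + s * p) ≠ 0 := ne_of_gt (by linarith)
    rw [hD]; field_simp
    have hX' : (1 - s + s * p) * (1 - s + s * p)⁻¹ = 1 := mul_inv_cancel₀ hX
    linear_combination (-1:ℝ) * hX'
  have hhalf : α / 2 ≤ α * (p-1) / D := by
    rw [div_le_div_iff₀ two_pos hD0]; nlinarith
  have key : a ^ (-(p-1)) * (1 + s) ^ (-(p-1)) ≤ (α / s) * D⁻¹ := by
    rw [haneg]
    exact mul_le_mul_of_nonneg_left hinv (by positivity)
  rw [haneg] at key
  rw [hsplit, hmul, haneg]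
  linarith

/-- deterministic polynomial Gronwall / blow-up time estimate.
Let `p > 2` and let `x_{t+1} = x_t + α x_t^p` with `x₀ ∈ (0,1)`. There are constants
`c_p, C_p > 0` depending only on `p` such that whenever `0 < α ≤ c_p/p`, the sequence
reaches level `1/2` within `C_p/(x₀^{p−1} α)` steps. -/
theorem deterministic_polynomial_gronwall (p : ℝ) (hp : 2 < p) :
    ∃ cp Cp : ℝ, 0 < cp ∧ 0 < Cp ∧
      ∀ (x₀ α : ℝ), x₀ ∈ Set.Ioo (0 : ℝ) 1 → 0 < α → α ≤ cp / p →
      ∀ x : ℕ → ℝ, x 0 = x₀ → (∀ t, x (t + 1) = x t + α * x t ^ p) →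
      ∃ t : ℕ, (t : ℝ) ≤ Cp / (x₀ ^ (p - 1) * α) ∧ 1 / 2 ≤ x t := by
  refine ⟨1, 3, one_pos, by norm_num, ?_⟩
  rintro x₀ α ⟨hx0, hx1⟩ hα hαp x hX0 hrec
  have hp0 : (0:ℝ) < p := by linarith
  have hαp' : α ≤ 1 / p := by rwa [one_div] at hαp ⊢
  have hpos : ∀ t, 0 < x t := by
    intro t
    induction t with
    | zero => rw [hX0]; exact hx0
    | succ n ih =>
      rw [hrec n]
      have := rpow_pos_of_pos ih p
      positivity
  set B : ℝ := 3 / (x₀ ^ (p - 1) * α) with hB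
  have hx0p : (0:ℝ) < x₀ ^ (p-1) := rpow_pos_of_pos hx0 _
  have hBpos : 0 < B := by positivity
  set N : ℕ := ⌊B⌋₊ with hN
  by_contra hcon
  push_neg at hcon
  have hsmall : ∀ t, t ≤ N → x t < 1/2 := by
    intro t ht
    have h1 : (t:ℝ) ≤ B := le_trans (Nat.cast_le.mpr ht) (Nat.floor_le hBpos.le)
    have := hcon t h1
    linarith
  have hdec : ∀ t, t ≤ N → (x t) ^ (-(p-1)) ≤ x₀ ^ (-(p-1)) - t * (α / 2) := by
    intro t ht
    induction t with
    | zero => simp [hX0]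
    | succ n ih =>
      have hn : n ≤ N := Nat.le_of_succ_le ht
      have h1 := ih hn
      have h2 : (x (n+1)) ^ (-(p-1)) ≤ (x n) ^ (-(p-1)) - α / 2 := by
        rw [hrec n]
        exact gronwall_decrement hp (hpos n) (hsmall n hn) hα hαp'
      push_cast
      linarith
  have hNpos : (0:ℝ) < (x N) ^ (-(p-1)) := rpow_pos_of_pos (hpos N) _
  have hfinal := hdec N le_rfl
  have hx0neg : x₀ ^ (-(p-1)) = (x₀ ^ (p-1))⁻¹ := Real.rpow_neg hx0.le _
  have h1 : (N:ℝ) * (α/2) < (x₀ ^ (p-1))⁻¹ := by rw [← hx0neg]; linarith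
  have h2 : (N:ℝ) * (α/2) * x₀ ^ (p-1) < 1 := by
    have := mul_lt_mul_of_pos_right h1 hx0p
    rwa [inv_mul_cancel₀ hx0p.ne'] at this
  have hNge : B - 1 < (N:ℝ) := Nat.sub_one_lt_floor B
  have hsmall1 : x₀ ^ (p-1) * α < 1 := by
    have ha1 : x₀ ^ (p-1) < 1 := rpow_lt_one hx0.le hx1 (by linarith)
    have ha2 : α < 1 := lt_of_le_of_lt hαp' (by rw [div_lt_one hp0]; linarith)
    nlinarith
  have hBge : 2 / (x₀ ^ (p-1) * α) ≤ B - 1 := by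
    rw [hB, div_sub' (by positivity : (x₀ ^ (p-1) * α) ≠ 0)]
    exact div_le_div_of_nonneg_right (by linarith) (by positivity)
  have h3 : 2 / (x₀ ^ (p-1) * α) < (N:ℝ) := lt_of_le_of_lt hBge hNge
  rw [div_lt_iff₀ (by positivity)] at h3
  nlinarith
end
end
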